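/- arXiv:1802.09117 — 3 statements merged into one kernel-verified Lean document; each statement's English description precedes it below -/
import Mathlib

section
/- Let c ∈ (0, 1/2) be a constant and suppose the sequence (m, n, p) satisfies 1 ≤ m ≤ p^c and m·(log p)/n ≤ 1/4 as p → ∞. Then for any a ∈ (0, (1−2c)/4), the sum over k = 0,…,m of [1 − k·a·(log p)/n]^{−n} · C(m,k)·C(p−m−1, m−k)/C(p−1, m) is at most 1 + o(1) as p → ∞. -/
open Filter Finset Real Topology

/-!
Write `L = log p` and let `K` be the overlap of two random `m`-subsets of a `(p - 1)`-set.
Since `(1 - x)⁻¹ ≤ exp (2x)` for `0 ≤ x ≤ 1/2`, the factor `[1 - k a L / n]^{-n}` is at most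
`p^{2ak}`, while `P(K = k) ≤ (2m²/p)^k ≤ (2p^{2c-1})^k`. Hence the `k`-th term is at most `q^k` with
`q = 2p^{2a+2c-1} → 0`, and the whole sum is at most `1 + 2q`.
-/

namespace Nat

theorem choose_sub_mul_pow_le {N M : ℕ} (hMN : M ≤ N) {k : ℕ} (hk : k ≤ M) :
    N.choose (M - k) * (N - M + 1) ^ k ≤ N.choose M * M ^ k := by
  induction k with
  | zero => simp
  | succ k ih =>
    have hstep : N.choose (M - (k + 1)) * (N - M + 1) ≤ N.choose (M - k) * M := by
      have h := choose_succ_right_eq N (M - (k + 1))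
      rw [show M - (k + 1) + 1 = M - k by omega] at h
      calc N.choose (M - (k + 1)) * (N - M + 1)
          ≤ N.choose (M - (k + 1)) * (N - (M - (k + 1))) := Nat.mul_le_mul_left _ (by omega)
        _ = N.choose (M - k) * (M - k) := h.symm
        _ ≤ N.choose (M - k) * M := Nat.mul_le_mul_left _ (by omega)
    calc N.choose (M - (k + 1)) * (N - M + 1) ^ (k + 1)
        = N.choose (M - (k + 1)) * (N - M + 1) * (N - M + 1) ^ k := by ring
      _ ≤ N.choose (M - k) * M * (N - M + 1) ^ k := Nat.mul_le_mul_right _ hstep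
      _ = N.choose (M - k) * (N - M + 1) ^ k * M := by ring
      _ ≤ N.choose M * M ^ k * M := Nat.mul_le_mul_right _ (ih (by omega))
      _ = N.choose M * M ^ (k + 1) := by ring

end Nat

theorem hypergeometric_weight_le {M P : ℕ} (hP : 0 < P) (hMP : 4 * M ≤ P) {k : ℕ} (hk : k ≤ M) :
    (M.choose k : ℝ) * (P - M - 1).choose (M - k) / (P - 1).choose M ≤ (2 * M ^ 2 / P) ^ k := by
  set N := P - M - 1
  have hMN : M ≤ N := by omega
  have hCN : (0 : ℝ) < N.choose M := by exact_mod_cast Nat.choose_pos hMN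
  have hND : (N.choose M : ℝ) ≤ (P - 1).choose M := by
    exact_mod_cast Nat.choose_le_choose M (show N ≤ P - 1 by omega)
  have hgap : (P : ℝ) / 2 ≤ (N - M + 1 : ℕ) := by
    rw [show N - M + 1 = P - 2 * M by omega, Nat.cast_sub (by omega)]
    have : (4 * M : ℝ) ≤ P := by exact_mod_cast hMP
    push_cast
    linarith
  have hratio : (N.choose (M - k) : ℝ) * ((P : ℝ) / 2) ^ k ≤ N.choose M * M ^ k := by
    calc (N.choose (M - k) : ℝ) * ((P : ℝ) / 2) ^ k
        ≤ N.choose (M - k) * ((N - M + 1 : ℕ) : ℝ) ^ k := by gcongr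
      _ ≤ N.choose M * M ^ k := by exact_mod_cast Nat.choose_sub_mul_pow_le hMN hk
  have hP2 : (0 : ℝ) < ((P : ℝ) / 2) ^ k := by positivity
  calc (M.choose k : ℝ) * N.choose (M - k) / (P - 1).choose M
      ≤ M.choose k * (N.choose (M - k) / N.choose M) := by
        rw [← mul_div_assoc]; exact div_le_div_of_nonneg_left (by positivity) hCN hND
    _ ≤ M ^ k * (M ^ k / ((P : ℝ) / 2) ^ k) := by
        refine mul_le_mul (by exact_mod_cast Nat.choose_le_pow M k) ?_ (by positivity)
          (by positivity)
        rw [div_le_div_iff₀ hCN hP2]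
        linarith
    _ = (M * M / ((P : ℝ) / 2)) ^ k := by rw [← mul_div_assoc, ← mul_pow, ← div_pow]
    _ = (2 * M ^ 2 / P) ^ k := by ring

theorem inv_one_sub_le_exp_two_mul {x : ℝ} (hx0 : 0 ≤ x) (hx : x ≤ 1 / 2) :
    (1 - x)⁻¹ ≤ exp (2 * x) := by
  rw [inv_le_iff_one_le_mul₀ (by linarith)]
  nlinarith [add_one_le_exp (2 * x), mul_nonneg hx0 (by linarith : (0 : ℝ) ≤ 1 - 2 * x)]

theorem inv_one_sub_div_pow_le_exp {x : ℝ} (n : ℕ) (hx0 : 0 ≤ x) (hx : x / n ≤ 1 / 2) :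
    ((1 - x / n) ^ n)⁻¹ ≤ exp (2 * x) := by
  rcases n.eq_zero_or_pos with rfl | hn
  · simpa using one_le_exp (by linarith : 0 ≤ 2 * x)
  · calc ((1 - x / n) ^ n)⁻¹ = (1 - x / n)⁻¹ ^ n := (inv_pow _ _).symm
      _ ≤ exp (2 * (x / n)) ^ n :=
        pow_le_pow_left₀ (inv_nonneg.2 (by linarith))
          (inv_one_sub_le_exp_two_mul (by positivity) hx) n
      _ = exp (2 * x) := by rw [← exp_nat_mul]; field_simp

theorem sum_range_le_one_add_two_mul {f : ℕ → ℝ} {q : ℝ} {M : ℕ} (hq0 : 0 ≤ q) (hq : q ≤ 1 / 2)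
    (hf : ∀ k ≤ M, f k ≤ q ^ k) : ∑ k ∈ range (M + 1), f k ≤ 1 + 2 * q := by
  have hgeom : ∑ j ∈ range M, q ^ j ≤ 2 :=
    calc ∑ j ∈ range M, q ^ j ≤ ∑ j ∈ range M, (1 / 2 : ℝ) ^ j := by gcongr
      _ ≤ 2 := sum_geometric_two_le M
  calc ∑ k ∈ range (M + 1), f k
      ≤ ∑ k ∈ range (M + 1), q ^ k := sum_le_sum fun k hk => hf k (by grind)
    _ = 1 + q * ∑ j ∈ range M, q ^ j := by
      rw [sum_range_succ', pow_zero, add_comm, mul_sum]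
      simp only [pow_succ']
    _ ≤ 1 + q * 2 := by gcongr
    _ = 1 + 2 * q := by ring

theorem limsup_le_of_eventually_le_of_tendsto {ι : Type*} {f : Filter ι} [f.NeBot] {u v : ι → ℝ}
    {b l : ℝ} (hb : ∀ᶠ i in f, b ≤ u i) (huv : u ≤ᶠ[f] v) (hv : Tendsto v f (𝓝 l)) :
    limsup u f ≤ l :=
  (limsup_le_limsup huv (isCoboundedUnder_le_of_eventually_le f hb) hv.isBoundedUnder_le).trans
    hv.limsup_eq.le

/-- `overlapMoment a m n p = E [(1 - a K log p / n)⁻ⁿ]`, where `K` is hypergeometric: the overlap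
of two independent uniformly random `m`-subsets of a `(p - 1)`-set. -/
noncomputable def overlapMoment (a : ℝ) (M n P : ℕ) : ℝ :=
  ∑ k ∈ range (M + 1), ((1 - (k : ℝ) * a * log P / n) ^ n)⁻¹ *
    ((M.choose k : ℝ) * (P - M - 1).choose (M - k) / (P - 1).choose M)

section overlapMoment

variable {a : ℝ} {M n P k : ℕ}

theorem mul_log_div_le_half (ha0 : 0 ≤ a) (ha : a ≤ 2) (hMn : (M : ℝ) * log P / n ≤ 1 / 4)
    (hk : k ≤ M) : (k : ℝ) * a * log P / n ≤ 1 / 2 :=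
  calc (k : ℝ) * a * log P / n ≤ M * a * log P / n := by gcongr
    _ = a * (M * log P / n) := by ring
    _ ≤ 2 * (1 / 4) := by gcongr
    _ = 1 / 2 := by norm_num

theorem overlapMoment_nonneg (ha0 : 0 ≤ a) (ha : a ≤ 2) (hMn : (M : ℝ) * log P / n ≤ 1 / 4) :
    0 ≤ overlapMoment a M n P := by
  refine sum_nonneg fun k hk => mul_nonneg (inv_nonneg.2 (pow_nonneg ?_ n)) (by positivity)
  linarith [mul_log_div_le_half ha0 ha hMn (show k ≤ M by grind)]

theorem overlapMoment_term_le {c : ℝ} (ha0 : 0 ≤ a) (ha : a ≤ 2) (hP : 0 < P) (hMP : 4 * M ≤ P)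
    (hMc : (M : ℝ) ≤ (P : ℝ) ^ c) (hMn : (M : ℝ) * log P / n ≤ 1 / 4) (hk : k ≤ M) :
    ((1 - (k : ℝ) * a * log P / n) ^ n)⁻¹ *
        ((M.choose k : ℝ) * (P - M - 1).choose (M - k) / (P - 1).choose M) ≤
      (2 * (P : ℝ) ^ (2 * a + 2 * c - 1)) ^ k := by
  have hPpos : (0 : ℝ) < P := by exact_mod_cast hP
  have hexp : exp (2 * ((k : ℝ) * a * log P)) = ((P : ℝ) ^ (2 * a)) ^ k := by
    rw [← rpow_natCast, ← rpow_mul hPpos.le, rpow_def_of_pos hPpos]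
    ring_nf
  have hM2 : (M : ℝ) ^ 2 ≤ (P : ℝ) ^ (2 * c) := by
    rw [mul_comm, rpow_mul hPpos.le, rpow_two]
    gcongr
  have hbase : (P : ℝ) ^ (2 * a) * (2 * M ^ 2 / P) ≤ 2 * (P : ℝ) ^ (2 * a + 2 * c - 1) := by
    rw [rpow_sub_one hPpos.ne', rpow_add hPpos]
    calc (P : ℝ) ^ (2 * a) * (2 * M ^ 2 / P) = 2 * ((P : ℝ) ^ (2 * a) * M ^ 2 / P) := by ring
      _ ≤ 2 * ((P : ℝ) ^ (2 * a) * (P : ℝ) ^ (2 * c) / P) := by gcongr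
  calc ((1 - (k : ℝ) * a * log P / n) ^ n)⁻¹ *
        ((M.choose k : ℝ) * (P - M - 1).choose (M - k) / (P - 1).choose M)
      ≤ exp (2 * ((k : ℝ) * a * log P)) * (2 * M ^ 2 / P) ^ k := by
        gcongr
        · exact inv_one_sub_div_pow_le_exp n (by positivity) (mul_log_div_le_half ha0 ha hMn hk)
        · exact hypergeometric_weight_le hP hMP hk
    _ = ((P : ℝ) ^ (2 * a) * (2 * M ^ 2 / P)) ^ k := by rw [hexp, mul_pow]
    _ ≤ (2 * (P : ℝ) ^ (2 * a + 2 * c - 1)) ^ k := by gcongr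

theorem overlapMoment_le {c : ℝ} (ha0 : 0 ≤ a) (ha : a ≤ 2) (hP : 0 < P)
    (hMc : (M : ℝ) ≤ (P : ℝ) ^ c) (hMn : (M : ℝ) * log P / n ≤ 1 / 4)
    (h4 : 4 ≤ (P : ℝ) ^ (1 - c)) (hr : (P : ℝ) ^ (2 * a + 2 * c - 1) ≤ 1 / 4) :
    overlapMoment a M n P ≤ 1 + 4 * (P : ℝ) ^ (2 * a + 2 * c - 1) := by
  have hPpos : (0 : ℝ) < P := by exact_mod_cast hP
  have hMP : 4 * M ≤ P := by
    have : (4 * M : ℝ) ≤ P :=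
      calc (4 * M : ℝ) ≤ (P : ℝ) ^ (1 - c) * (P : ℝ) ^ c := by gcongr
        _ = P := by rw [← rpow_add hPpos]; simp
    exact_mod_cast this
  have hsum := sum_range_le_one_add_two_mul (by positivity) (by linarith)
    fun k hk => overlapMoment_term_le ha0 ha hP hMP hMc hMn hk
  unfold overlapMoment
  linarith

end overlapMoment

theorem stmt2_general (c a : ℝ) (hc0 : 0 < c)
    (ha0 : 0 < a) (ha1 : a < (1 - 2*c)/4)
    (m n p : ℕ → ℕ)
    (hp : Tendsto (fun i => p i) atTop atTop)
    (hmc : ∀ i, (m i : ℝ) ≤ (p i : ℝ) ^ c)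
    (hmn : ∀ i, (m i : ℝ) * Real.log (p i) / (n i) ≤ 1/4) :
    Filter.limsup (fun i =>
        ∑ k ∈ Finset.range (m i + 1),
          ((1 - (k : ℝ) * a * Real.log (p i) / (n i)) ^ (n i))⁻¹ *
            ((Nat.choose (m i) k : ℝ) * (Nat.choose (p i - m i - 1) (m i - k)) /
              (Nat.choose (p i - 1) (m i)))) atTop ≤ 1 := by
  have hε : 0 < 1 - 2 * c - 2 * a := by linarith
  have ha2 : a ≤ 2 := by linarith
  have hpR : Tendsto (fun i => (p i : ℝ)) atTop atTop := tendsto_natCast_atTop_atTop.comp hp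
  have hr : Tendsto (fun i => (p i : ℝ) ^ (2 * a + 2 * c - 1)) atTop (𝓝 0) := by
    rw [show 2 * a + 2 * c - 1 = -(1 - 2 * c - 2 * a) by ring]
    exact (tendsto_rpow_neg_atTop hε).comp hpR
  have hlim : Tendsto (fun i => 1 + 4 * (p i : ℝ) ^ (2 * a + 2 * c - 1)) atTop (𝓝 1) := by
    simpa using (hr.const_mul 4).const_add 1
  show limsup (fun i => overlapMoment a (m i) (n i) (p i)) atTop ≤ 1
  refine limsup_le_of_eventually_le_of_tendsto
    (.of_forall fun i => overlapMoment_nonneg ha0.le ha2 (hmn i)) ?_ hlim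
  filter_upwards [hp.eventually_ge_atTop 1,
    ((tendsto_rpow_atTop (by linarith : (0 : ℝ) < 1 - c)).comp hpR).eventually_ge_atTop 4,
    hr.eventually_le_const (by norm_num : (0 : ℝ) < 1 / 4)] with i hp1 hp4 hr4
  exact overlapMoment_le ha0.le ha2 hp1 (hmc i) (hmn i) hp4 hr4

/-- the hypergeometric-weighted sum
`∑_{k=0}^{m} [1 − k a (log p)/n]^{−n} C(m,k)C(p−m−1,m−k)/C(p−1,m)`
is at most `1 + o(1)` as `p → ∞`, i.e. its limsup is at most 1. -/
theorem stmt2 (c a : ℝ) (hc0 : 0 < c) (hc1 : c < 1/2)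
    (ha0 : 0 < a) (ha1 : a < (1 - 2*c)/4)
    (m n p : ℕ → ℕ)
    (hp : Tendsto (fun i => p i) atTop atTop)
    (hm1 : ∀ i, 1 ≤ m i)
    (hmc : ∀ i, (m i : ℝ) ≤ (p i : ℝ) ^ c)
    (hmn : ∀ i, (m i : ℝ) * Real.log (p i) / (n i) ≤ 1/4) :
    Filter.limsup (fun i =>
        ∑ k ∈ Finset.range (m i + 1),
          ((1 - (k : ℝ) * a * Real.log (p i) / (n i)) ^ (n i))⁻¹ *
            ((Nat.choose (m i) k : ℝ) * (Nat.choose (p i - m i - 1) (m i - k)) /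
              (Nat.choose (p i - 1) (m i)))) atTop ≤ 1 :=
  stmt2_general c a hc0 ha0 ha1 m n p hp hmc hmn
end

section
/- Let Q₁, Q₂ be (p+1)×(p+1) matrices such that Qⱼ Qⱼᵀ − I_{p+1} has the symmetric arrowhead form [[0, a₂ δⱼ, a₁ δⱼ], [a₂ δⱼᵀ, 0, 0], [a₁ δⱼᵀ, 0, 0]] for j = 1,2, where δ₁, δ₂ ∈ ℝ^{p−1} and a₁, a₂ ∈ ℝ. Then det(I_{p+1} − (Q₁Q₁ᵀ − I_{p+1})(Q₂Q₂ᵀ − I_{p+1})) = (1 − (a₁² + a₂²) δ₁ᵀδ₂)². -/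
/-!
Both factors are block anti-diagonal, so their product is block diagonal with blocks
`δ₁ aᵀ · a δ₂ᵀ = |a|² δ₁ δ₂ᵀ` (size `m`) and `a δ₁ᵀ · δ₂ aᵀ = (δ₁ᵀδ₂) a aᵀ` (size 2), where
`a = (a₂, a₁)`. By Sylvester's identity `det (1 - u vᵀ) = 1 - vᵀu` each block contributes the
factor `1 - |a|² δ₁ᵀδ₂`.
-/

open Matrix

namespace Matrix

variable {m n R : Type*} [Fintype m] [Fintype n] [CommRing R]

theorem det_one_sub_vecMulVec [DecidableEq n] (u v : n → R) :
    det (1 - vecMulVec u v) = 1 - v ⬝ᵥ u := by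
  rw [vecMulVec_eq Unit, det_one_sub_mul_comm, det_unique, sub_apply, one_apply_eq,
    replicateRow_mul_replicateCol_apply]

theorem det_one_sub_vecMulVec_mul_vecMulVec [DecidableEq m] (u : m → R) (v w : n → R)
    (x : m → R) :
    det (1 - vecMulVec u v * vecMulVec w x) = 1 - (v ⬝ᵥ w) * (x ⬝ᵥ u) := by
  rw [vecMulVec_mul_vecMulVec, det_one_sub_vecMulVec, smul_dotProduct, smul_eq_mul]

theorem det_one_sub_fromBlocks_zero_mul_fromBlocks_zero [DecidableEq m] [DecidableEq n]
    (B₁ B₂ : Matrix m n R) (C₁ C₂ : Matrix n m R) :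
    det (1 - fromBlocks 0 B₁ C₁ 0 * fromBlocks 0 B₂ C₂ 0)
      = det (1 - B₁ * C₂) * det (1 - C₁ * B₂) := by
  rw [fromBlocks_multiply, ← fromBlocks_one, sub_eq_add_neg, fromBlocks_neg, fromBlocks_add]
  simp [← sub_eq_add_neg]

end Matrix

/-- if `Qⱼ Qⱼᵀ − I` has the symmetric arrowhead form with zero
diagonal blocks and off-diagonal columns `a₂ δⱼ` and `a₁ δⱼ`, then
`det(I − (Q₁Q₁ᵀ − I)(Q₂Q₂ᵀ − I)) = (1 − (a₁² + a₂²) δ₁ᵀδ₂)²`. -/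
theorem stmt8 (m : ℕ) (a₁ a₂ : ℝ) (δ₁ δ₂ : Fin m → ℝ)
    (Q₁ Q₂ : Matrix (Fin m ⊕ Fin 2) (Fin m ⊕ Fin 2) ℝ)
    (h₁ : Q₁ * Q₁ᵀ - 1 =
      Matrix.fromBlocks 0
        (Matrix.of fun (i : Fin m) (c : Fin 2) => (if c = 0 then a₂ else a₁) * δ₁ i)
        (Matrix.of fun (c : Fin 2) (i : Fin m) => (if c = 0 then a₂ else a₁) * δ₁ i)
        0)
    (h₂ : Q₂ * Q₂ᵀ - 1 =
      Matrix.fromBlocks 0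
        (Matrix.of fun (i : Fin m) (c : Fin 2) => (if c = 0 then a₂ else a₁) * δ₂ i)
        (Matrix.of fun (c : Fin 2) (i : Fin m) => (if c = 0 then a₂ else a₁) * δ₂ i)
        0) :
    (1 - (Q₁ * Q₁ᵀ - 1) * (Q₂ * Q₂ᵀ - 1)).det
      = (1 - (a₁ ^ 2 + a₂ ^ 2) * (δ₁ ⬝ᵥ δ₂)) ^ 2 := by
  set a : Fin 2 → ℝ := fun c => if c = 0 then a₂ else a₁
  have hcol (δ : Fin m → ℝ) : of (fun i c => a c * δ i) = vecMulVec δ a := by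
    ext i c
    exact mul_comm _ _
  have hrow (δ : Fin m → ℝ) : of (fun c i => a c * δ i) = vecMulVec a δ := rfl
  have ha : a ⬝ᵥ a = a₁ ^ 2 + a₂ ^ 2 := by
    simp only [dotProduct, Fin.sum_univ_two, a, Fin.isValue, ↓reduceIte, one_ne_zero]
    ring
  rw [h₁, h₂, hcol, hcol, hrow, hrow, det_one_sub_fromBlocks_zero_mul_fromBlocks_zero,
    det_one_sub_vecMulVec_mul_vecMulVec, det_one_sub_vecMulVec_mul_vecMulVec, ha,
    dotProduct_comm δ₂]
  ring
end

section
/- Suppose there exist constants c₁, c₂ > 0, a sequence h_n > 0, and a confidence interval CI* ∈ C_α(Θ) such that (1) for every τ ∈ ℝ, every test ψ with sup_{θ: g(θ)=τ} E_θ ψ ≤ α satisfies sup_{θ: g(θ)=τ+c₁h_n} E_θ ψ ≤ 2α, and (2) sup_{θ∈Θ} E_θ diam(CI*) ≤ c₂ h_n. Then for α ∈ (0, 1/3): inf_{CI∈C_α(Θ)} inf_{θ∈Θ} E_θ diam(CI) ≥ (1−3α) c₁ h_n. -/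
open MeasureTheory
open scoped ENNReal

variable {D Θ' : Type*} [MeasurableSpace D]

/-- Coverage of a confidence interval `[l, u]` for `g(θ)` uniformly over `Θ₁`. -/
def covers (P : Θ' → Measure D) (g : Θ' → ℝ) (α : ℝ) (Θ₁ : Set Θ')
    (l u : D → ℝ) : Prop :=
  ∀ θ ∈ Θ₁, ENNReal.ofReal (1 - α) ≤ P θ {x | l x ≤ g θ ∧ g θ ≤ u x}

/-- `CI = [l,u]` is a valid (measurable) `1−α` confidence interval over `Θ₁`. -/
def isCI (P : Θ' → Measure D) (g : Θ' → ℝ) (α : ℝ) (Θ₁ : Set Θ')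
    (l u : D → ℝ) : Prop :=
  Measurable l ∧ Measurable u ∧ covers P g α Θ₁ l u

/-- Expected length of the interval `[l, u]` under `P θ`. -/
noncomputable def elen (P : Θ' → Measure D) (θ : Θ') (l u : D → ℝ) : ℝ≥0∞ :=
  ∫⁻ x, ENNReal.ofReal (u x - l x) ∂(P θ)

/-- `L(Θ₁, Θ₀)`: minimax expected length over `Θ₁` of confidence intervals
valid over `Θ₀`. -/
noncomputable def minimaxLen (P : Θ' → Measure D) (g : Θ' → ℝ) (α : ℝ)
    (Θ₁ Θ₀ : Set Θ') : ℝ≥0∞ :=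
  ⨅ (lu : (D → ℝ) × (D → ℝ)) (_ : isCI P g α Θ₀ lu.1 lu.2),
    ⨆ θ ∈ Θ₁, elen P θ lu.1 lu.2


/-!
A confidence interval with coverage `1 - α` yields, for every `τ`, the level-`α` test
"reject when `τ ∉ [l, u]`". At a parameter `θ` with `g θ = τ + δ`, the power bound makes this test
accept with probability at least `1 - 2α`, while coverage puts `g θ` itself in `[l, u]` with
probability at least `1 - α`; on both events `[l, u]` contains two points at distance `|δ|`, which
happens with probability at least `1 - 3α`. Markov's inequality turns this into the bound on the
expected length.
-/

section Probability

variable {Ω : Type*} [MeasurableSpace Ω] {μ : Measure Ω} [IsProbabilityMeasure μ]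

lemma prob_compl_le_of_ofReal_one_sub_le {s : Set Ω} (hs : MeasurableSet s) {α : ℝ}
    (h : ENNReal.ofReal (1 - α) ≤ μ s) : μ sᶜ ≤ ENNReal.ofReal α := by
  rw [prob_compl_eq_one_sub hs, tsub_le_iff_right]
  calc (1 : ℝ≥0∞) = ENNReal.ofReal (α + (1 - α)) := by simp
    _ ≤ ENNReal.ofReal α + ENNReal.ofReal (1 - α) := ENNReal.ofReal_add_le
    _ ≤ ENNReal.ofReal α + μ s := by gcongr

lemma one_sub_add_le_prob_inter {s t : Set Ω} {a b : ℝ≥0∞} (hs : μ sᶜ ≤ a) (ht : μ tᶜ ≤ b) :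
    1 - (a + b) ≤ μ (s ∩ t) := by
  rw [tsub_le_iff_right]
  calc (1 : ℝ≥0∞) = μ Set.univ := measure_univ.symm
    _ ≤ μ (s ∩ t) + μ (s ∩ t)ᶜ := measure_univ_le_add_compl _
    _ ≤ μ (s ∩ t) + (μ sᶜ + μ tᶜ) := by
      rw [Set.compl_inter]; gcongr; exact measure_union_le _ _
    _ ≤ μ (s ∩ t) + (a + b) := by gcongr

end Probability

section IntervalTest

variable {X : Type*} {l u : X → ℝ}

def coverSet (l u : X → ℝ) (τ : ℝ) : Set X := {x | l x ≤ τ ∧ τ ≤ u x}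

noncomputable def ciTest (l u : X → ℝ) (τ : ℝ) : X → ℝ := (coverSet l u τ)ᶜ.indicator 1

lemma ciTest_mem_unitInterval (τ : ℝ) (x : X) :
    0 ≤ ciTest l u τ x ∧ ciTest l u τ x ≤ 1 :=
  ⟨Set.indicator_nonneg (fun _ _ => zero_le_one) x,
    Set.indicator_le_self' (fun _ _ => zero_le_one) x⟩

variable [MeasurableSpace X]

lemma measurableSet_coverSet (hl : Measurable l) (hu : Measurable u) (τ : ℝ) :
    MeasurableSet (coverSet l u τ) :=
  (measurableSet_le hl measurable_const).inter (measurableSet_le measurable_const hu)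

lemma measurable_ciTest (hl : Measurable l) (hu : Measurable u) (τ : ℝ) :
    Measurable (ciTest l u τ) :=
  measurable_one.indicator (measurableSet_coverSet hl hu τ).compl

lemma integral_ciTest (hl : Measurable l) (hu : Measurable u) (τ : ℝ) (μ : Measure X) :
    ∫ x, ciTest l u τ x ∂μ = μ.real (coverSet l u τ)ᶜ :=
  integral_indicator_one (measurableSet_coverSet hl hu τ).compl

end IntervalTest

section LowerBound

variable (P : Θ' → Measure D) (g : Θ' → ℝ) {α : ℝ} {Θ : Set Θ'} {l u : D → ℝ}

lemma ofReal_mul_prob_le_elen (hl : Measurable l) (hu : Measurable u) (θ : Θ') (c : ℝ) :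
    ENNReal.ofReal c * P θ {x | c ≤ u x - l x} ≤ elen P θ l u :=
  calc ENNReal.ofReal c * P θ {x | c ≤ u x - l x}
      ≤ ENNReal.ofReal c * P θ {x | ENNReal.ofReal c ≤ ENNReal.ofReal (u x - l x)} := by
        gcongr
        exact ENNReal.ofReal_le_ofReal
    _ ≤ elen P θ l u :=
        mul_meas_ge_le_lintegral₀ (hu.sub hl).ennreal_ofReal.aemeasurable _

variable [∀ θ, IsProbabilityMeasure (P θ)]

lemma integral_ciTest_le_of_isCI (hCI : isCI P g α Θ l u) (hα : 0 ≤ α) (τ : ℝ) :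
    ∀ θ ∈ Θ, g θ = τ → ∫ x, ciTest l u τ x ∂(P θ) ≤ α := by
  obtain ⟨hl, hu, hcov⟩ := hCI
  rintro θ hθ rfl
  rw [integral_ciTest hl hu]
  exact ENNReal.toReal_le_of_le_ofReal hα <|
    prob_compl_le_of_ofReal_one_sub_le (measurableSet_coverSet hl hu _) (hcov θ hθ)

lemma ofReal_one_sub_three_mul_le_prob_dist_le_sub (hCI : isCI P g α Θ l u) (hα : 0 ≤ α)
    {θ : Θ'} (hθ : θ ∈ Θ) {τ : ℝ} (hpower : ∫ x, ciTest l u τ x ∂(P θ) ≤ 2 * α) :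
    ENNReal.ofReal (1 - 3 * α) ≤ P θ {x | |g θ - τ| ≤ u x - l x} := by
  obtain ⟨hl, hu, hcov⟩ := hCI
  have hreject : P θ (coverSet l u τ)ᶜ ≤ ENNReal.ofReal (2 * α) := by
    rwa [integral_ciTest hl hu, measureReal_def,
      ← ENNReal.le_ofReal_iff_toReal_le (measure_ne_top _ _) (by positivity)] at hpower
  have hmiss : P θ (coverSet l u (g θ))ᶜ ≤ ENNReal.ofReal α :=
    prob_compl_le_of_ofReal_one_sub_le (measurableSet_coverSet hl hu _) (hcov θ hθ)
  calc ENNReal.ofReal (1 - 3 * α) = 1 - (ENNReal.ofReal (2 * α) + ENNReal.ofReal α) := by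
        rw [← ENNReal.ofReal_add (by positivity) hα, ← ENNReal.ofReal_one,
          ← ENNReal.ofReal_sub _ (by positivity)]
        ring_nf
    _ ≤ P θ (coverSet l u τ ∩ coverSet l u (g θ)) := one_sub_add_le_prob_inter hreject hmiss
    _ ≤ P θ {x | |g θ - τ| ≤ u x - l x} := by
      refine measure_mono fun x ⟨⟨hlτ, hτu⟩, ⟨hlg, hgu⟩⟩ => ?_
      show |g θ - τ| ≤ u x - l x
      exact abs_sub_le_iff.mpr ⟨by linarith, by linarith⟩

end LowerBound

theorem stmt11_general (P : Θ' → Measure D) [∀ θ, IsProbabilityMeasure (P θ)]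
    (g : Θ' → ℝ) (Θ : Set Θ') (α c₁ h : ℝ)
    (hα0 : 0 < α) (hα1 : α < 1/3)
    (htest : ∀ τ : ℝ, ∀ ψ : D → ℝ, Measurable ψ → (∀ x, 0 ≤ ψ x ∧ ψ x ≤ 1) →
      (∀ θ ∈ Θ, g θ = τ → ∫ x, ψ x ∂(P θ) ≤ α) →
      ∀ θ ∈ Θ, g θ = τ + c₁ * h → ∫ x, ψ x ∂(P θ) ≤ 2 * α) :
    ENNReal.ofReal ((1 - 3 * α) * c₁ * h) ≤
      ⨅ (lu : (D → ℝ) × (D → ℝ)) (_ : isCI P g α Θ lu.1 lu.2),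
        ⨅ θ ∈ Θ, elen P θ lu.1 lu.2 := by
  refine le_iInf₂ fun lu hlu => le_iInf₂ fun θ hθ => ?_
  set τ := g θ - c₁ * h
  have hpower := htest τ (ciTest lu.1 lu.2 τ) (measurable_ciTest hlu.1 hlu.2.1 τ)
    (ciTest_mem_unitInterval τ) (integral_ciTest_le_of_isCI P g hlu hα0.le τ) θ hθ (by ring)
  have hdist : |g θ - τ| = |c₁ * h| := by simp only [τ, sub_sub_cancel]
  calc ENNReal.ofReal ((1 - 3 * α) * c₁ * h)
      ≤ ENNReal.ofReal (|c₁ * h| * (1 - 3 * α)) := by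
        refine ENNReal.ofReal_le_ofReal ?_
        nlinarith [le_abs_self (c₁ * h)]
    _ = ENNReal.ofReal |c₁ * h| * ENNReal.ofReal (1 - 3 * α) :=
        ENNReal.ofReal_mul (abs_nonneg _)
    _ ≤ ENNReal.ofReal |c₁ * h| * P θ {x | |c₁ * h| ≤ lu.2 x - lu.1 x} := by
        rw [← hdist]
        gcongr
        exact ofReal_one_sub_three_mul_le_prob_dist_le_sub P g hlu hα0.le hθ hpower
    _ ≤ elen P θ lu.1 lu.2 := ofReal_mul_prob_le_elen P hlu.1 hlu.2.1 θ _

/-- if (1) every level-`α` test of `{g(θ)=τ}` has power at most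
`2α` on `{g(θ)=τ+c₁h}` for every `τ`, and (2) there is a valid confidence
interval `CI* ∈ C_α(Θ)` with `sup_{θ∈Θ} E_θ diam(CI*) ≤ c₂ h`, then for
`α ∈ (0,1/3)`, `inf_{CI∈C_α(Θ)} inf_{θ∈Θ} E_θ diam(CI) ≥ (1−3α) c₁ h`. -/
theorem stmt11 (P : Θ' → Measure D) [∀ θ, IsProbabilityMeasure (P θ)]
    (g : Θ' → ℝ) (Θ : Set Θ') (α c₁ c₂ h : ℝ)
    (hα0 : 0 < α) (hα1 : α < 1/3) (hc₁ : 0 < c₁) (hc₂ : 0 < c₂) (hh : 0 < h)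
    (lstar ustar : D → ℝ) (hCI : isCI P g α Θ lstar ustar)
    (hlen : (⨆ θ ∈ Θ, elen P θ lstar ustar) ≤ ENNReal.ofReal (c₂ * h))
    (htest : ∀ τ : ℝ, ∀ ψ : D → ℝ, Measurable ψ → (∀ x, 0 ≤ ψ x ∧ ψ x ≤ 1) →
      (∀ θ ∈ Θ, g θ = τ → ∫ x, ψ x ∂(P θ) ≤ α) →
      ∀ θ ∈ Θ, g θ = τ + c₁ * h → ∫ x, ψ x ∂(P θ) ≤ 2 * α) :
    ENNReal.ofReal ((1 - 3 * α) * c₁ * h) ≤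
      ⨅ (lu : (D → ℝ) × (D → ℝ)) (_ : isCI P g α Θ lu.1 lu.2),
        ⨅ θ ∈ Θ, elen P θ lu.1 lu.2 :=
  stmt11_general P g Θ α c₁ h hα0 hα1 htest
end
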